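/- Let A be a uniformly returning set for f ∈ 𝒫_μ with slowly varying wandering rate W_n ∼ L(n), L satisfying the hypotheses of Erickson's lemma (continuous, strictly increasing to ∞, slowly varying), and fix x ∈ (0,1). Then for all ε ∈ (0,1) there exists n₀ such that for all n ≥ n₀ and all integers k ∈ [n − a_n(x), n], one has (1−ε)/W_n ≤ T̂^k(f) ≤ (1+ε)²/W_n uniformly on A, where a_n(x) = L^{-1}(x·L(n)). -/

import Mathlib

open MeasureTheory Filter Set Topology
open scoped Classical

noncomputable section

variable {X : Type*} [MeasurableSpace X]

/-- `F` is regularly varying at infinity with exponent `β`; slowly varying means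
regularly varying with exponent `0`. -/
def RegVary (F : ℝ → ℝ) (β : ℝ) : Prop :=
  ∀ l : ℝ, 0 < l → Tendsto (fun t => F (l * t) / F t) atTop (nhds (l ^ β))

/-- Wandering rate `W_n(A) = μ(⋃_{k=0}^n T^{-k} A)`. -/
def W (μ : Measure X) (T : X → X) (A : Set X) (n : ℕ) : ℝ :=
  (μ (⋃ k ∈ Finset.range (n + 1), T^[k] ⁻¹' A)).toReal

/-- `f` is a probability density with respect to `μ`. -/
def IsDensity (μ : Measure X) (f : X → ℝ) : Prop :=
  (∀ x, 0 ≤ f x) ∧ Integrable f μ ∧ ∫ x, f x ∂μ = 1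

/-- `hatT` is the transfer operator of `T` with respect to `μ`. -/
def IsTransferOp (μ : Measure X) (T : X → X) (hatT : (X → ℝ) → (X → ℝ)) : Prop :=
  ∀ f : X → ℝ, Integrable f μ → ∀ B : Set X, MeasurableSet B →
    ∫ x in B, hatT f x ∂μ = ∫ x in T ⁻¹' B, f x ∂μ

/-- `A` is a uniformly returning set for `f`. -/
def UniformlyReturningFor (μ : Measure X) (hatT : (X → ℝ) → (X → ℝ))
    (A : Set X) (f : X → ℝ) : Prop :=
  ∃ b : ℕ → ℝ, (∀ n, 0 < b n) ∧ Monotone b ∧ Tendsto b atTop atTop ∧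
    ∀ ε : ℝ, 0 < ε → ∀ᶠ n : ℕ in atTop,
      ∀ᵐ x ∂μ, x ∈ A → |b n * (hatT^[n] f) x - 1| ≤ ε

set_option linter.unusedSectionVars false

namespace Stmt18Aux


set_option linter.unusedSectionVars false

variable {X : Type*} [MeasurableSpace X]

/-- Points of `A` that do not return to `A` within the first `m` iterations. -/
def Bs (T : X → X) (A : Set X) (m : ℕ) : Set X :=
  A ∩ ⋂ i ∈ Finset.Icc 1 m, (T^[i] ⁻¹' A)ᶜ

lemma mem_Bs {T : X → X} {A : Set X} {m : ℕ} {x : X} :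
    x ∈ Bs T A m ↔ x ∈ A ∧ ∀ i, 1 ≤ i → i ≤ m → T^[i] x ∉ A := by
  simp [Bs, and_imp]

lemma Bs_subset {T : X → X} {A : Set X} {m : ℕ} : Bs T A m ⊆ A :=
  Set.inter_subset_left

lemma measurableSet_Bs {T : X → X} {A : Set X} (hT : Measurable T)
    (hA : MeasurableSet A) (m : ℕ) : MeasurableSet (Bs T A m) := by
  refine hA.inter (MeasurableSet.biInter (Set.to_countable _) fun i _ => ?_)
  exact ((hA.preimage (hT.iterate i))).compl

lemma Bs_antitone {T : X → X} {A : Set X} : Antitone (Bs T A) := by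
  intro m m' hmm' x hx
  rw [mem_Bs] at hx ⊢
  exact ⟨hx.1, fun i h1 h2 => hx.2 i h1 (h2.trans hmm')⟩

lemma decomp (T : X → X) (A : Set X) (n : ℕ) :
    (⋃ k ∈ Finset.range (n + 1), T^[k] ⁻¹' A)
      = ⋃ k ∈ Finset.range (n + 1), T^[k] ⁻¹' (Bs T A (n - k)) := by
  ext x
  simp only [Set.mem_iUnion, Finset.mem_range, Nat.lt_succ_iff, Set.mem_preimage]
  constructor
  · rintro ⟨j, hj, hx⟩
    set K := Nat.findGreatest (fun i => T^[i] x ∈ A) n with hK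
    have hKle : K ≤ n := Nat.findGreatest_le n
    have hKA : T^[K] x ∈ A := Nat.findGreatest_spec (P := fun i => T^[i] x ∈ A) hj hx
    refine ⟨K, hKle, ?_⟩
    rw [mem_Bs]
    refine ⟨hKA, fun i h1 h2 => ?_⟩
    have heq : T^[i] (T^[K] x) = T^[i + K] x := (Function.iterate_add_apply T i K x).symm
    rw [heq]
    exact Nat.findGreatest_is_greatest (P := fun i => T^[i] x ∈ A) (n := n)
      (by omega) (by omega)
  · rintro ⟨k, hk, hx⟩
    exact ⟨k, hk, (mem_Bs.1 hx).1⟩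

lemma disj (T : X → X) (A : Set X) (n : ℕ) :
    Set.Pairwise (↑(Finset.range (n + 1)))
      (Function.onFun Disjoint fun k => T^[k] ⁻¹' (Bs T A (n - k))) := by
  have key : ∀ k k', k < k' → k' ≤ n →
      Disjoint (T^[k] ⁻¹' (Bs T A (n - k))) (T^[k'] ⁻¹' (Bs T A (n - k'))) := by
    intro k k' hlt hle
    rw [Set.disjoint_left]
    intro x hx hx'
    rw [Set.mem_preimage, mem_Bs] at hx hx'
    have h2 : T^[k' - k] (T^[k] x) ∉ A := hx.2 (k' - k) (by omega) (by omega)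
    have heq : T^[k' - k] (T^[k] x) = T^[k'] x := by
      rw [← Function.iterate_add_apply]
      congr 1
      omega
    rw [heq] at h2
    exact h2 hx'.1
  intro k hk k' hk' hne
  simp only [Finset.coe_range, Set.mem_Iio] at hk hk'
  rcases lt_or_gt_of_ne hne with h | h
  · exact key k k' h (by omega)
  · exact (key k' k h (by omega)).symm


section Meas

variable (μ : Measure X) (T : X → X) (A : Set X) (f : X → ℝ) (hatT : (X → ℝ) → (X → ℝ))

lemma meas_Bs_ne_top {μ : Measure X} {T : X → X} {A : Set X} (h1 : μ A ≠ ⊤) (m : ℕ) :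
    μ (Bs T A m) ≠ ⊤ :=
  fun h => h1 (top_le_iff.1 (h ▸ measure_mono (Bs_subset (T := T) (A := A) (m := m))))

lemma W_eq_sum_rev (hT : MeasurePreserving T μ μ) (hA : MeasurableSet A) (h1 : μ A ≠ ⊤)
    (n : ℕ) :
    W μ T A n = ∑ k ∈ Finset.range (n + 1), (μ (Bs T A (n - k))).toReal := by
  unfold W
  rw [decomp, measure_biUnion_finset (disj T A n)
    (fun k _ => (measurableSet_Bs hT.measurable hA (n - k)).preimage (hT.measurable.iterate k)),
    ENNReal.toReal_sum]
  · refine Finset.sum_congr rfl fun k _ => ?_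
    rw [(hT.iterate k).measure_preimage (measurableSet_Bs hT.measurable hA (n - k)).nullMeasurableSet]
  · intro k _
    rw [(hT.iterate k).measure_preimage (measurableSet_Bs hT.measurable hA (n - k)).nullMeasurableSet]
    exact meas_Bs_ne_top h1 _

lemma W_eq_sum (hT : MeasurePreserving T μ μ) (hA : MeasurableSet A) (h1 : μ A ≠ ⊤)
    (n : ℕ) :
    W μ T A n = ∑ m ∈ Finset.range (n + 1), (μ (Bs T A m)).toReal := by
  rw [W_eq_sum_rev μ T A hT hA h1 n]
  simpa using Finset.sum_range_reflect (fun m => (μ (Bs T A m)).toReal) (n + 1)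

lemma iter_props (hop : IsTransferOp μ T hatT) (hfi : Integrable f μ)
    (hf1 : ∫ x, f x ∂μ = 1) :
    ∀ k, Integrable (hatT^[k] f) μ ∧ ∫ x, (hatT^[k] f) x ∂μ = 1 := by
  intro k
  induction k with
  | zero => exact ⟨hfi, hf1⟩
  | succ k ih =>
    have h2 : ∫ x, hatT (hatT^[k] f) x ∂μ = 1 := by
      have h := hop (hatT^[k] f) ih.1 Set.univ MeasurableSet.univ
      rw [Set.preimage_univ, setIntegral_univ, setIntegral_univ] at h
      rw [h, ih.2]
    rw [Function.iterate_succ_apply']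
    refine ⟨?_, h2⟩
    by_contra hni
    rw [integral_undef hni] at h2
    norm_num at h2

lemma iter_setIntegral (hop : IsTransferOp μ T hatT) (hfi : Integrable f μ)
    (hf1 : ∫ x, f x ∂μ = 1) (hTm : Measurable T) (k : ℕ) :
    ∀ B : Set X, MeasurableSet B →
      ∫ x in B, (hatT^[k] f) x ∂μ = ∫ x in T^[k] ⁻¹' B, f x ∂μ := by
  induction k with
  | zero => intro B _; simp
  | succ k ih =>
    intro B hB
    rw [Function.iterate_succ_apply']
    have h := hop (hatT^[k] f) (iter_props μ T f hatT hop hfi hf1 k).1 B hB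
    rw [h, ih (T ⁻¹' B) (hB.preimage hTm), Function.iterate_succ', Set.preimage_comp]

lemma integral_decomp (hT : MeasurePreserving T μ μ) (hA : MeasurableSet A)
    (hfi : Integrable f μ) (n : ℕ) :
    ∫ x in (⋃ k ∈ Finset.range (n + 1), T^[k] ⁻¹' A), f x ∂μ
      = ∑ k ∈ Finset.range (n + 1), ∫ x in T^[k] ⁻¹' (Bs T A (n - k)), f x ∂μ := by
  rw [decomp]
  exact integral_biUnion_finset _
    (fun k _ => (measurableSet_Bs hT.measurable hA (n - k)).preimage (hT.measurable.iterate k))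
    (disj T A n) (fun k _ => hfi.integrableOn)

end Meas


section Limits

variable (μ : Measure X) (T : X → X) (A : Set X) (f : X → ℝ)

lemma mu_iInter_Bs_zero (hc : Conservative T μ) (hA : MeasurableSet A) :
    μ (⋂ m, Bs T A m) = 0 := by
  refine measure_mono_null ?_ (hc.measure_mem_forall_ge_image_notMem_eq_zero
    hA.nullMeasurableSet 1)
  intro x hx
  rw [Set.mem_iInter] at hx
  have h0 := (mem_Bs.1 (hx 0)).1
  refine ⟨h0, fun m hm => ?_⟩
  exact (mem_Bs.1 (hx m)).2 m hm le_rfl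

lemma c_tendsto_zero (hT : MeasurePreserving T μ μ) (hc : Conservative T μ)
    (hA : MeasurableSet A) (h1 : μ A ≠ ⊤) :
    Tendsto (fun m => (μ (Bs T A m)).toReal) atTop (𝓝 0) := by
  have h := tendsto_measure_iInter_atTop (μ := μ)
    (fun m => (measurableSet_Bs hT.measurable hA m).nullMeasurableSet)
    (Bs_antitone (T := T) (A := A)) ⟨0, meas_Bs_ne_top h1 0⟩
  rw [mu_iInter_Bs_zero μ T A hc hA] at h
  have h2 := (ENNReal.tendsto_toReal (a := 0) (by simp)).comp h
  simpa [Function.comp_def] using h2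

lemma A_subset_C : A ⊆ ⋃ k : ℕ, T^[k] ⁻¹' A := fun x hx =>
  Set.mem_iUnion.2 ⟨0, by simpa using hx⟩

lemma mu_C_compl_zero (hc : Conservative T μ) (he : Ergodic T μ)
    (hA : MeasurableSet A) (h0 : μ A ≠ 0) :
    μ (⋃ k : ℕ, T^[k] ⁻¹' A)ᶜ = 0 := by
  set C := ⋃ k : ℕ, T^[k] ⁻¹' A with hC
  have hCm : MeasurableSet C :=
    MeasurableSet.iUnion fun k => hA.preimage (he.toMeasurePreserving.measurable.iterate k)
  have hsub : T ⁻¹' C ⊆ C := by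
    intro x hx
    rw [Set.mem_preimage, hC, Set.mem_iUnion] at hx
    obtain ⟨k, hk⟩ := hx
    rw [Set.mem_preimage] at hk
    exact Set.mem_iUnion.2 ⟨k + 1, by
      rw [Set.mem_preimage, Function.iterate_succ_apply]; exact hk⟩
  have hdiff : μ (C \ T ⁻¹' C) = 0 := by
    refine measure_mono_null ?_ (hc.measure_mem_forall_ge_image_notMem_eq_zero
      hA.nullMeasurableSet 1)
    rintro x ⟨hxC, hxnC⟩
    have hnot : ∀ m ≥ 1, T^[m] x ∉ A := by
      intro m hm hmem
      refine hxnC ?_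
      rw [Set.mem_preimage, hC, Set.mem_iUnion]
      refine ⟨m - 1, ?_⟩
      rw [Set.mem_preimage, ← Function.iterate_succ_apply]
      have hmm : m - 1 + 1 = m := by omega
      simpa [hmm] using hmem
    rw [hC, Set.mem_iUnion] at hxC
    obtain ⟨k, hk⟩ := hxC
    rw [Set.mem_preimage] at hk
    rcases Nat.eq_zero_or_pos k with rfl | hkpos
    · exact ⟨by simpa using hk, hnot⟩
    · exact absurd hk (hnot k hkpos)
  have hae : T ⁻¹' C =ᵐ[μ] C := by
    rw [ae_eq_set]
    constructor
    · rw [Set.diff_eq_empty.2 hsub]; simp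
    · exact hdiff
  rcases he.quasiErgodic.ae_empty_or_univ₀ hCm.nullMeasurableSet hae with h | h
  · exact absurd (measure_mono_null (A_subset_C T A) (ae_eq_empty.1 h)) h0
  · exact ae_eq_univ.1 h

lemma I_tendsto_one (hT : MeasurePreserving T μ μ) (hc : Conservative T μ)
    (he : Ergodic T μ) (hA : MeasurableSet A) (h0 : μ A ≠ 0)
    (hfi : Integrable f μ) (hf1 : ∫ x, f x ∂μ = 1) :
    Tendsto (fun n => ∫ x in (⋃ k ∈ Finset.range (n + 1), T^[k] ⁻¹' A), f x ∂μ)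
      atTop (𝓝 1) := by
  set s : ℕ → Set X := fun n => ⋃ k ∈ Finset.range (n + 1), T^[k] ⁻¹' A with hs
  have hsm : ∀ n, MeasurableSet (s n) := fun n =>
    MeasurableSet.biUnion (Set.to_countable _)
      (fun k _ => hA.preimage (hT.measurable.iterate k))
  have hmono : Monotone s := by
    intro n m hnm x hx
    simp only [hs, Set.mem_iUnion, Finset.mem_range] at hx ⊢
    obtain ⟨k, hk, hxk⟩ := hx
    exact ⟨k, by omega, hxk⟩
  have hUnion : (⋃ n, s n) = ⋃ k : ℕ, T^[k] ⁻¹' A := by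
    ext x
    simp only [hs, Set.mem_iUnion, Finset.mem_range]
    constructor
    · rintro ⟨n, k, _, hxk⟩; exact ⟨k, hxk⟩
    · rintro ⟨k, hxk⟩; exact ⟨k, k, by omega, hxk⟩
  have h := tendsto_setIntegral_of_monotone hsm hmono (by rw [hUnion]; exact hfi.integrableOn)
  rw [hUnion] at h
  have hint : ∫ x in (⋃ k : ℕ, T^[k] ⁻¹' A), f x ∂μ = 1 := by
    have hCm : MeasurableSet (⋃ k : ℕ, T^[k] ⁻¹' A) :=
      MeasurableSet.iUnion fun k => hA.preimage (hT.measurable.iterate k)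
    have hadd := integral_add_compl hCm hfi
    have hz : ∫ x in (⋃ k : ℕ, T^[k] ⁻¹' A)ᶜ, f x ∂μ = 0 := by
      rw [Measure.restrict_eq_zero.2 (mu_C_compl_zero μ T A hc he hA h0)]
      exact integral_zero_measure f
    rw [hz, add_zero] at hadd
    rw [hadd, hf1]
  rw [hint] at h
  exact h

lemma early_term_tendsto_zero (hT : MeasurePreserving T μ μ) (hc : Conservative T μ)
    (hA : MeasurableSet A) (hfi : Integrable f μ) (k : ℕ) :
    Tendsto (fun n => ∫ x in T^[k] ⁻¹' (Bs T A (n - k)), f x ∂μ) atTop (𝓝 0) := by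
  set F : ℕ → X → ℝ := fun n => (T^[k] ⁻¹' (Bs T A (n - k))).indicator f with hF
  have hmeasset : ∀ n, MeasurableSet (T^[k] ⁻¹' (Bs T A (n - k))) := fun n =>
    (measurableSet_Bs hT.measurable hA (n - k)).preimage (hT.measurable.iterate k)
  have hZ : μ (T^[k] ⁻¹' (⋂ m, Bs T A m)) = 0 := by
    rw [(hT.iterate k).measure_preimage
      ((MeasurableSet.iInter fun m => measurableSet_Bs hT.measurable hA m).nullMeasurableSet)]
    exact mu_iInter_Bs_zero μ T A hc hA
  have hlim : ∀ᵐ x ∂μ, Tendsto (fun n => F n x) atTop (𝓝 0) := by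
    filter_upwards [measure_eq_zero_iff_ae_notMem.1 hZ] with x hx
    rw [Set.mem_preimage, Set.mem_iInter] at hx
    push_neg at hx
    obtain ⟨m, hm⟩ := hx
    have hev : ∀ᶠ n in atTop, F n x = 0 := by
      filter_upwards [eventually_ge_atTop (m + k)] with n hn
      have : T^[k] x ∉ Bs T A (n - k) := fun hmem =>
        hm (Bs_antitone (by omega : m ≤ n - k) hmem)
      simp [hF, Set.indicator_of_notMem, this]
    exact Tendsto.congr' (hev.mono fun n h => h.symm) tendsto_const_nhds
  have hdom := tendsto_integral_of_dominated_convergence (fun x => |f x|)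
    (fun n => hfi.aestronglyMeasurable.indicator (hmeasset n)) hfi.abs
    (fun n => Eventually.of_forall fun x => by
      rw [Real.norm_eq_abs]
      calc |F n x| = ‖F n x‖ := (Real.norm_eq_abs _).symm
      _ ≤ ‖f x‖ := norm_indicator_le_norm_self f x
      _ = |f x| := Real.norm_eq_abs _) hlim
  simp only [integral_zero] at hdom
  refine hdom.congr fun n => ?_
  exact integral_indicator (hmeasset n)

end Limits


section Ratio

variable (μ : Measure X) (T : X → X) (A : Set X) (L : ℝ → ℝ)

lemma mu_An_ne_top (hT : MeasurePreserving T μ μ) (hA : MeasurableSet A) (h1 : μ A ≠ ⊤)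
    (n : ℕ) : μ (⋃ k ∈ Finset.range (n + 1), T^[k] ⁻¹' A) ≠ ⊤ := by
  refine ne_top_of_le_ne_top ?_ (measure_biUnion_finset_le _ _)
  rw [← lt_top_iff_ne_top]
  refine ENNReal.sum_lt_top.2 fun k _ => ?_
  rw [(hT.iterate k).measure_preimage hA.nullMeasurableSet, lt_top_iff_ne_top]
  exact h1

lemma W_pos (hT : MeasurePreserving T μ μ) (hA : MeasurableSet A) (h0 : μ A ≠ 0)
    (h1 : μ A ≠ ⊤) (n : ℕ) : 0 < W μ T A n := by
  refine ENNReal.toReal_pos (fun h => h0 ?_) (mu_An_ne_top μ T A hT hA h1 n)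
  have hsub : A ⊆ ⋃ k ∈ Finset.range (n + 1), T^[k] ⁻¹' A := by
    intro y hy
    simp only [Set.mem_iUnion, Finset.mem_range]
    exact ⟨0, by omega, by simpa using hy⟩
  exact le_antisymm (le_trans (measure_mono hsub) h.le) zero_le

lemma W_mono (hT : MeasurePreserving T μ μ) (hA : MeasurableSet A) (h1 : μ A ≠ ⊤) :
    Monotone (W μ T A) := by
  intro n m hnm
  refine ENNReal.toReal_mono (mu_An_ne_top μ T A hT hA h1 m) (measure_mono ?_)
  intro y hy
  simp only [Set.mem_iUnion, Finset.mem_range] at hy ⊢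
  obtain ⟨k, hk, hyk⟩ := hy
  exact ⟨k, by omega, hyk⟩

lemma L_ratio (hLsv : RegVary L 0) {c : ℝ} (hc : 0 < c) :
    Tendsto (fun n : ℕ => L (c * n) / L n) atTop (𝓝 1) := by
  have h := hLsv c hc
  rw [Real.rpow_zero] at h
  exact h.comp tendsto_natCast_atTop_atTop

lemma W_ratio (hT : MeasurePreserving T μ μ) (hA : MeasurableSet A) (h0 : μ A ≠ 0)
    (h1 : μ A ≠ ⊤) (hLpos : ∀ t : ℝ, 0 < t → 0 < L t) (hLsv : RegVary L 0)
    (hLmono : StrictMonoOn L (Set.Ioi 0))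
    (hW : Tendsto (fun n : ℕ => W μ T A n / L n) atTop (nhds 1))
    (φ : ℕ → ℕ) {p q : ℝ} (hp : 0 < p) (hpq : p ≤ q)
    (hφ : ∀ᶠ n : ℕ in atTop, p * n ≤ (φ n : ℝ) ∧ (φ n : ℝ) ≤ q * n) :
    Tendsto (fun n : ℕ => W μ T A (φ n) / W μ T A n) atTop (𝓝 1) := by
  have hφR : Tendsto (fun n : ℕ => (φ n : ℝ)) atTop atTop := by
    refine tendsto_atTop_mono' atTop (hφ.mono fun n h => h.1) ?_
    exact (tendsto_natCast_atTop_atTop).const_mul_atTop hp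
  have hφtop : Tendsto φ atTop atTop := by
    rw [tendsto_atTop] at hφR ⊢
    intro b
    filter_upwards [hφR b] with n hn
    exact_mod_cast hn
  have fac1 : Tendsto (fun n : ℕ => W μ T A (φ n) / L (φ n)) atTop (𝓝 1) :=
    hW.comp hφtop
  have fac3 : Tendsto (fun n : ℕ => L n / W μ T A n) atTop (𝓝 1) := by
    have := hW.inv₀ one_ne_zero
    simp only [inv_div, inv_one] at this
    exact this
  have fac2 : Tendsto (fun n : ℕ => L (φ n) / L n) atTop (𝓝 1) := by
    have hlow := L_ratio L hLsv hp
    have hhigh := L_ratio L hLsv (lt_of_lt_of_le hp hpq)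
    refine tendsto_of_tendsto_of_tendsto_of_le_of_le' hlow hhigh ?_ ?_
    · filter_upwards [hφ, eventually_ge_atTop 1] with n hn hn1
      have hn0 : (0:ℝ) < n := by exact_mod_cast hn1
      have hLn : 0 < L n := hLpos _ hn0
      have harg : (0:ℝ) < p * n := mul_pos hp hn0
      have hφpos : (0:ℝ) < (φ n : ℝ) := lt_of_lt_of_le harg hn.1
      have : L (p * n) ≤ L (φ n : ℝ) :=
        hLmono.monotoneOn harg (by exact hφpos) hn.1
      exact by gcongr
    · filter_upwards [hφ, eventually_ge_atTop 1] with n hn hn1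
      have hn0 : (0:ℝ) < n := by exact_mod_cast hn1
      have hLn : 0 < L n := hLpos _ hn0
      have harg : (0:ℝ) < p * n := mul_pos hp hn0
      have hφpos : (0:ℝ) < (φ n : ℝ) := lt_of_lt_of_le harg hn.1
      have hqn : (0:ℝ) < q * n := mul_pos (lt_of_lt_of_le hp hpq) hn0
      have : L (φ n : ℝ) ≤ L (q * n) :=
        hLmono.monotoneOn (by exact hφpos) hqn hn.2
      exact by gcongr
  have hprod := (fac1.mul fac2).mul fac3
  rw [show (1:ℝ) * 1 * 1 = 1 by norm_num] at hprod
  refine hprod.congr' ?_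
  filter_upwards [hφ, eventually_ge_atTop 1] with n hn hn1
  have hn0 : (0:ℝ) < n := by exact_mod_cast hn1
  have hLn : L n ≠ 0 := (hLpos _ hn0).ne'
  have hφpos : (0:ℝ) < (φ n : ℝ) := lt_of_lt_of_le (mul_pos hp hn0) hn.1
  have hLφ : L (φ n) ≠ 0 := (hLpos _ hφpos).ne'
  have hWn : W μ T A n ≠ 0 := (W_pos μ T A hT hA h0 h1 n).ne'
  field_simp

lemma W_atTop (hT : MeasurePreserving T μ μ) (hLpos : ∀ t : ℝ, 0 < t → 0 < L t)
    (hLtop : Tendsto L atTop atTop)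
    (hW : Tendsto (fun n : ℕ => W μ T A n / L n) atTop (nhds 1)) :
    Tendsto (W μ T A) atTop atTop := by
  have hLn : Tendsto (fun n : ℕ => L n) atTop atTop :=
    hLtop.comp tendsto_natCast_atTop_atTop
  have h := hW.pos_mul_atTop one_pos hLn
  refine h.congr' ?_
  filter_upwards [eventually_ge_atTop 1] with n hn1
  have hn0 : (0:ℝ) < n := by exact_mod_cast hn1
  exact div_mul_cancel₀ _ (hLpos _ hn0).ne'

end Ratio


section Kar

variable (μ : Measure X) (T : X → X) (A : Set X) (L : ℝ → ℝ)

/-- Common hypotheses bundle. -/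
structure Ctx (μ : Measure X) (T : X → X) (A : Set X) (L : ℝ → ℝ) : Prop where
  hT : MeasurePreserving T μ μ
  hA : MeasurableSet A
  h0 : μ A ≠ 0
  h1 : μ A ≠ ⊤
  hLpos : ∀ t : ℝ, 0 < t → 0 < L t
  hLsv : RegVary L 0
  hLmono : StrictMonoOn L (Set.Ioi 0)
  hW : Tendsto (fun n : ℕ => W μ T A n / L n) atTop (nhds 1)

variable {μ T A L}

lemma Ctx.ratio (c : Ctx μ T A L) (φ : ℕ → ℕ) {p q : ℝ} (hp : 0 < p) (hpq : p ≤ q)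
    (hφ : ∀ᶠ n : ℕ in atTop, p * n ≤ (φ n : ℝ) ∧ (φ n : ℝ) ≤ q * n) :
    Tendsto (fun n : ℕ => W μ T A (φ n) / W μ T A n) atTop (𝓝 1) :=
  W_ratio μ T A L c.hT c.hA c.h0 c.h1 c.hLpos c.hLsv c.hLmono c.hW φ hp hpq hφ

lemma Ctx.ratio_sub_half (c : Ctx μ T A L) :
    Tendsto (fun n : ℕ => W μ T A (n - n / 2) / W μ T A n) atTop (𝓝 1) := by
  refine c.ratio _ (p := 1/2) (q := 3/4) (by norm_num) (by norm_num) ?_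
  filter_upwards [eventually_ge_atTop 2] with n hn
  have h1 : n / 2 ≤ n := Nat.div_le_self n 2
  have h2 : 2 * (n - n / 2) ≥ n := by omega
  have h3 : 4 * (n - n / 2) ≤ 3 * n := by omega
  constructor
  · have := (Nat.cast_le (α := ℝ)).2 h2; push_cast at this ⊢; linarith
  · have := (Nat.cast_le (α := ℝ)).2 h3; push_cast at this ⊢; linarith

lemma Ctx.ratio_half (c : Ctx μ T A L) :
    Tendsto (fun n : ℕ => W μ T A (n / 2) / W μ T A n) atTop (𝓝 1) := by
  refine c.ratio _ (p := 1/4) (q := 1/2) (by norm_num) (by norm_num) ?_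
  filter_upwards [eventually_ge_atTop 2] with n hn
  have h2 : 4 * (n / 2) ≥ n := by omega
  have h3 : 2 * (n / 2) ≤ n := by omega
  constructor
  · have := (Nat.cast_le (α := ℝ)).2 h2; push_cast at this ⊢; linarith
  · have := (Nat.cast_le (α := ℝ)).2 h3; push_cast at this ⊢; linarith

lemma Ctx.ratio_quarter (c : Ctx μ T A L) :
    Tendsto (fun n : ℕ => W μ T A (n / 4) / W μ T A n) atTop (𝓝 1) := by
  refine c.ratio _ (p := 1/8) (q := 1/4) (by norm_num) (by norm_num) ?_
  filter_upwards [eventually_ge_atTop 8] with n hn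
  have h2 : 8 * (n / 4) ≥ n := by omega
  have h3 : 4 * (n / 4) ≤ n := by omega
  constructor
  · have := (Nat.cast_le (α := ℝ)).2 h2; push_cast at this ⊢; linarith
  · have := (Nat.cast_le (α := ℝ)).2 h3; push_cast at this ⊢; linarith

lemma Ctx.ratio_double_succ (c : Ctx μ T A L) :
    Tendsto (fun m : ℕ => W μ T A (2 * m + 1) / W μ T A m) atTop (𝓝 1) := by
  refine c.ratio _ (p := 2) (q := 3) (by norm_num) (by norm_num) ?_
  filter_upwards [eventually_ge_atTop 1] with m hm
  have h1 : (1:ℝ) ≤ m := by exact_mod_cast hm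
  constructor <;> push_cast <;> linarith

lemma Ctx.ratio_double (c : Ctx μ T A L) :
    Tendsto (fun m : ℕ => W μ T A (2 * m) / W μ T A m) atTop (𝓝 1) := by
  refine c.ratio _ (p := 2) (q := 2) (by norm_num) le_rfl ?_
  filter_upwards with m
  constructor <;> push_cast <;> linarith

lemma Ctx.karW (c : Ctx μ T A L) :
    ∃ C : ℝ, 0 < C ∧ ∀ n : ℕ,
      ∑ k ∈ Finset.range (n + 1), 1 / W μ T A k ≤ C * (n + 1) / W μ T A n := by
  have hWpos : ∀ n, 0 < W μ T A n := W_pos μ T A c.hT c.hA c.h0 c.h1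
  have hWmono : Monotone (W μ T A) := W_mono μ T A c.hT c.hA c.h1
  obtain ⟨N, hN⟩ := eventually_atTop.1
    (c.ratio_double_succ.eventually_le_const (by norm_num : (1:ℝ) < 4/3))
  have hsv2 : ∀ m ≥ N, W μ T A (2 * m + 1) ≤ 4/3 * W μ T A m := by
    intro m hm
    have := hN m hm
    rw [div_le_iff₀ (hWpos m)] at this
    linarith
  set C : ℝ := max 8 (W μ T A (2 * N + 1) / W μ T A 0) with hC
  have hC8 : (8:ℝ) ≤ C := le_max_left _ _
  have hCW : W μ T A (2 * N + 1) / W μ T A 0 ≤ C := le_max_right _ _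
  refine ⟨C, by linarith, ?_⟩
  intro n
  induction n using Nat.strong_induction_on with
  | _ n ih =>
    by_cases hn : n ≤ 2 * N + 1
    · have hsum : ∑ k ∈ Finset.range (n + 1), 1 / W μ T A k ≤ (n + 1) / W μ T A 0 := by
        rw [div_eq_mul_one_div]
        calc ∑ k ∈ Finset.range (n + 1), 1 / W μ T A k
            ≤ ∑ k ∈ Finset.range (n + 1), 1 / W μ T A 0 := by
              refine Finset.sum_le_sum fun k _ => ?_
              exact one_div_le_one_div_of_le (hWpos 0) (hWmono (Nat.zero_le k))
          _ = (n + 1) * (1 / W μ T A 0) := by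
              rw [Finset.sum_const, Finset.card_range, nsmul_eq_mul]; push_cast; ring
      refine hsum.trans ?_
      rw [div_le_div_iff₀ (hWpos 0) (hWpos n)]
      have hWle : W μ T A n ≤ W μ T A (2 * N + 1) := hWmono hn
      have hq : W μ T A (2 * N + 1) ≤ C * W μ T A 0 := by
        rw [div_le_iff₀ (hWpos 0)] at hCW
        linarith
      have hn1 : (0:ℝ) < (n:ℝ) + 1 := by positivity
      calc ((n:ℝ) + 1) * W μ T A n ≤ ((n:ℝ) + 1) * (C * W μ T A 0) := by
            refine mul_le_mul_of_nonneg_left (hWle.trans hq) hn1.le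
        _ = C * ((n:ℝ) + 1) * W μ T A 0 := by ring
    · push_neg at hn
      set m := n / 2 with hm
      have hmN : N ≤ m := by omega
      have hmlt : m < n := by omega
      have hn2m : 2 * m ≤ n := by omega
      have hn2m1 : n ≤ 2 * m + 1 := by omega
      have hWnm : W μ T A n ≤ 4/3 * W μ T A m :=
        (hWmono hn2m1).trans (hsv2 m hmN)
      have hsplit : ∑ k ∈ Finset.range (n + 1), 1 / W μ T A k
          = ∑ k ∈ Finset.range (m + 1), 1 / W μ T A k
            + ∑ k ∈ Finset.Ico (m + 1) (n + 1), 1 / W μ T A k := by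
        rw [Finset.range_eq_Ico, Finset.range_eq_Ico]
        exact (Finset.sum_Ico_consecutive _ (by omega) (by omega)).symm
      have htail : ∑ k ∈ Finset.Ico (m + 1) (n + 1), 1 / W μ T A k
          ≤ ((n:ℝ) - m) * (1 / W μ T A m) := by
        have hcard : (Finset.Ico (m + 1) (n + 1)).card = n - m := by
          rw [Nat.card_Ico]; omega
        have := Finset.sum_le_card_nsmul (Finset.Ico (m + 1) (n + 1))
          (fun k => 1 / W μ T A k) (1 / W μ T A m) ?_
        · rw [hcard, nsmul_eq_mul] at this
          refine this.trans ?_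
          have : ((n - m : ℕ) : ℝ) = (n:ℝ) - m := by
            push_cast [Nat.cast_sub hmlt.le]; ring
          rw [this]
        · intro k hk
          rw [Finset.mem_Ico] at hk
          exact one_div_le_one_div_of_le (hWpos m) (hWmono (by omega))
      have hih := ih m hmlt
      have hWm : (0:ℝ) < W μ T A m := hWpos m
      have hWn : (0:ℝ) < W μ T A n := hWpos n
      have hkey : C * ((m:ℝ) + 1) / W μ T A m + ((n:ℝ) - m) * (1 / W μ T A m)
          ≤ C * ((n:ℝ) + 1) / W μ T A n := by
        have hWm' : (3:ℝ)/4 * W μ T A n ≤ W μ T A m := by linarith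
        rw [div_add' _ _ _ hWm.ne', div_le_div_iff₀ hWm hWn]
        have hmr : (2:ℝ) * m ≤ n := by exact_mod_cast hn2m
        have hmr2 : (n:ℝ) ≤ 2 * m + 1 := by exact_mod_cast hn2m1
        have hm1 : (1:ℝ) ≤ m := by
          have : (1:ℕ) ≤ m := by omega
          exact_mod_cast this
        have hsimp : ((n:ℝ) - m) * (1 / W μ T A m) * W μ T A m = (n:ℝ) - m := by
          field_simp
        rw [hsimp]
        have hcoef : C * ((m:ℝ) + 1) + ((n:ℝ) - (m:ℝ)) ≤ 3/4 * (C * ((n:ℝ) + 1)) := by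
          nlinarith [mul_nonneg (sub_nonneg.2 hC8) (sub_nonneg.2 hm1),
            mul_nonneg (by linarith : (0:ℝ) ≤ C) (by linarith : (0:ℝ) ≤ (n:ℝ) - 2 * m)]
        calc (C * ((m:ℝ) + 1) + ((n:ℝ) - (m:ℝ))) * W μ T A n
            ≤ (3/4 * (C * ((n:ℝ) + 1))) * W μ T A n :=
              mul_le_mul_of_nonneg_right hcoef hWn.le
          _ = (C * ((n:ℝ) + 1)) * (3/4 * W μ T A n) := by ring
          _ ≤ (C * ((n:ℝ) + 1)) * W μ T A m := by
              refine mul_le_mul_of_nonneg_left hWm' ?_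
              have : (0:ℝ) ≤ C := by linarith
              positivity
      calc ∑ k ∈ Finset.range (n + 1), 1 / W μ T A k
          ≤ C * ((m:ℝ) + 1) / W μ T A m + ((n:ℝ) - m) * (1 / W μ T A m) := by
            rw [hsplit]; push_cast at hih ⊢; exact add_le_add hih htail
        _ ≤ C * ((n:ℝ) + 1) / W μ T A n := hkey
      
end Kar


section Main

variable {μ : Measure X} {T : X → X} {A : Set X} {L : ℝ → ℝ}
  {f : X → ℝ} {hatT : (X → ℝ) → (X → ℝ)} {b : ℕ → ℝ}

/-- Full hypothesis bundle. -/
structure Setup (μ : Measure X) (T : X → X) (A : Set X) (L : ℝ → ℝ)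
    (f : X → ℝ) (hatT : (X → ℝ) → (X → ℝ)) (b : ℕ → ℝ)
    extends Ctx μ T A L : Prop where
  hc : Conservative T μ
  he : Ergodic T μ
  hop : IsTransferOp μ T hatT
  hf0 : ∀ x, 0 ≤ f x
  hfi : Integrable f μ
  hf1 : ∫ x, f x ∂μ = 1
  hb : ∀ n, 0 < b n
  hbmono : Monotone b
  hconv : ∀ ε : ℝ, 0 < ε → ∀ᶠ k : ℕ in atTop,
    ∀ᵐ x ∂μ, x ∈ A → |b k * (hatT^[k] f) x - 1| ≤ ε

namespace Setup

variable (S : Setup μ T A L f hatT b)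
include S

lemma c_nonneg (m : ℕ) : 0 ≤ (μ (Bs T A m)).toReal := ENNReal.toReal_nonneg

lemma c_anti : Antitone (fun m => (μ (Bs T A m)).toReal) := by
  intro m m' hmm'
  exact ENNReal.toReal_mono (meas_Bs_ne_top S.h1 m) (measure_mono (Bs_antitone hmm'))

lemma c_to_zero : Tendsto (fun m => (μ (Bs T A m)).toReal) atTop (𝓝 0) :=
  c_tendsto_zero μ T A S.hT S.hc S.hA S.h1

/-- Bounds for `∫_{T^-k Bs m} f` when the uniform-return estimate holds at time `k`. -/
lemma v_bounds {δ : ℝ} (hδ : 0 < δ) (k m : ℕ)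
    (hae : ∀ᵐ x ∂μ, x ∈ A → |b k * (hatT^[k] f) x - 1| ≤ δ) :
    (1 - δ) / b k * (μ (Bs T A m)).toReal ≤ ∫ x in T^[k] ⁻¹' (Bs T A m), f x ∂μ ∧
      ∫ x in T^[k] ⁻¹' (Bs T A m), f x ∂μ ≤ (1 + δ) / b k * (μ (Bs T A m)).toReal := by
  have hbk := S.hb k
  have hBm : MeasurableSet (Bs T A m) := measurableSet_Bs S.hT.measurable S.hA m
  have hμB : μ (Bs T A m) ≠ ⊤ := meas_Bs_ne_top S.h1 m
  have heq : ∫ x in Bs T A m, (hatT^[k] f) x ∂μ = ∫ x in T^[k] ⁻¹' (Bs T A m), f x ∂μ :=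
    iter_setIntegral μ T f hatT S.hop S.hfi S.hf1 S.hT.measurable k _ hBm
  rw [← heq]
  have haeB : ∀ᵐ x ∂(μ.restrict (Bs T A m)),
      (1 - δ) / b k ≤ (hatT^[k] f) x ∧ (hatT^[k] f) x ≤ (1 + δ) / b k := by
    filter_upwards [ae_restrict_of_ae hae, ae_restrict_mem hBm] with x hx hxB
    have h := abs_le.1 (hx (Bs_subset hxB))
    constructor
    · rw [div_le_iff₀ hbk]; nlinarith [h.1]
    · rw [le_div_iff₀ hbk]; nlinarith [h.2]
  have hint : IntegrableOn (hatT^[k] f) (Bs T A m) μ :=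
    (iter_props μ T f hatT S.hop S.hfi S.hf1 k).1.integrableOn
  have hconst : ∀ r : ℝ, IntegrableOn (fun _ => r) (Bs T A m) μ := fun r =>
    integrableOn_const hμB
  constructor
  · have hle := integral_mono_ae (hconst ((1 - δ) / b k)) hint
      (haeB.mono fun x h => h.1)
    rw [setIntegral_const] at hle
    rw [smul_eq_mul, mul_comm] at hle
    exact hle
  · have hle := integral_mono_ae hint (hconst ((1 + δ) / b k))
      (haeB.mono fun x h => h.2)
    rw [setIntegral_const] at hle
    rw [smul_eq_mul, mul_comm] at hle
    exact hle

omit S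

lemma sum_c_reflect (k₀ n : ℕ) (hk : k₀ ≤ n) (c : ℕ → ℝ) :
    ∑ k ∈ Finset.Icc k₀ n, c (n - k) = ∑ j ∈ Finset.range (n - k₀ + 1), c j := by
  refine Finset.sum_nbij' (fun k => n - k) (fun j => n - j) ?_ ?_ ?_ ?_ ?_
  · intro a ha; rw [Finset.mem_Icc] at ha; rw [Finset.mem_range]; omega
  · intro a ha; rw [Finset.mem_range] at ha; rw [Finset.mem_Icc]; omega
  · intro a ha; rw [Finset.mem_Icc] at ha; omega
  · intro a ha; rw [Finset.mem_range] at ha; omega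
  · intro a _; rfl

include S

/-- The renewal identity: `∫_{A_n} f = Σ_k v_{k,n}`. -/
lemma renewal (n : ℕ) :
    ∫ x in (⋃ k ∈ Finset.range (n + 1), T^[k] ⁻¹' A), f x ∂μ
      = ∑ k ∈ Finset.range (n + 1), ∫ x in T^[k] ⁻¹' (Bs T A (n - k)), f x ∂μ :=
  integral_decomp μ T A f S.hT S.hA S.hfi n

lemma int_An_le_one (n : ℕ) :
    ∫ x in (⋃ k ∈ Finset.range (n + 1), T^[k] ⁻¹' A), f x ∂μ ≤ 1 := by
  rw [← S.hf1]
  exact setIntegral_le_integral S.hfi (Eventually.of_forall S.hf0)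

/-- Easy direction: `b_n ≳ W_n`. -/
lemma easy_dir {γ : ℝ} (hγ0 : 0 < γ) (hγ1 : γ < 1) :
    ∀ᶠ n : ℕ in atTop, (1 - γ) * W μ T A n ≤ b n := by
  set δ := γ / 2 with hδdef
  have hδ0 : 0 < δ := by positivity
  have hδ1 : δ < 1 := by linarith
  obtain ⟨k₀, hk₀⟩ := eventually_atTop.1 (S.hconv δ hδ0)
  -- eventually k₀ * c (n - k₀) ≤ δ * W 0
  have hW0 : 0 < W μ T A 0 := W_pos μ T A S.hT S.hA S.h0 S.h1 0
  have hcW : Tendsto (fun n : ℕ => (k₀ : ℝ) * (μ (Bs T A (n - k₀))).toReal)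
      atTop (𝓝 0) := by
    have := (S.c_to_zero.comp (tendsto_sub_atTop_nat k₀)).const_mul (k₀ : ℝ)
    simpa using this
  have hev := hcW.eventually_le_const (by positivity : (0:ℝ) < δ * W μ T A 0)
  filter_upwards [hev, eventually_ge_atTop (k₀ + 1)] with n hcn hn1
  have hk₀n : k₀ ≤ n := by omega
  -- lower bound on the renewal sum
  have hWmono := W_mono μ T A S.hT S.hA S.h1
  have hWn : 0 < W μ T A n := W_pos μ T A S.hT S.hA S.h0 S.h1 n
  have hbn := S.hb n
  have key : (1 - δ) / b n * W μ T A (n - k₀) ≤ 1 := by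
    refine le_trans ?_ (S.int_An_le_one n)
    rw [S.renewal n]
    have hsub : Finset.Icc k₀ n ⊆ Finset.range (n + 1) := by
      intro k hk; rw [Finset.mem_Icc] at hk; rw [Finset.mem_range]; omega
    have h1 : ∑ k ∈ Finset.Icc k₀ n, ∫ x in T^[k] ⁻¹' (Bs T A (n - k)), f x ∂μ
        ≤ ∑ k ∈ Finset.range (n + 1), ∫ x in T^[k] ⁻¹' (Bs T A (n - k)), f x ∂μ := by
      refine Finset.sum_le_sum_of_subset_of_nonneg hsub fun k _ _ => ?_
      exact setIntegral_nonneg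
        ((measurableSet_Bs S.hT.measurable S.hA (n - k)).preimage
          (S.hT.measurable.iterate k)) (fun x _ => S.hf0 x)
    refine le_trans ?_ h1
    have h2 : ∀ k ∈ Finset.Icc k₀ n,
        (1 - δ) / b n * (μ (Bs T A (n - k))).toReal
          ≤ ∫ x in T^[k] ⁻¹' (Bs T A (n - k)), f x ∂μ := by
      intro k hk
      rw [Finset.mem_Icc] at hk
      have hv := (S.v_bounds hδ0 k (n - k) (hk₀ k hk.1)).1
      refine le_trans ?_ hv
      refine mul_le_mul_of_nonneg_right ?_ (S.c_nonneg _)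
      refine div_le_div_of_nonneg_left (by linarith) (S.hb k) ?_
      exact S.hbmono hk.2
    calc (1 - δ) / b n * W μ T A (n - k₀)
        = ∑ k ∈ Finset.Icc k₀ n, (1 - δ) / b n * (μ (Bs T A (n - k))).toReal := by
          rw [← Finset.mul_sum,
            sum_c_reflect k₀ n hk₀n (fun m => (μ (Bs T A m)).toReal),
            W_eq_sum μ T A S.hT S.hA S.h1]
      _ ≤ _ := Finset.sum_le_sum h2
  -- W (n - k₀) ≥ (1 - δ) W n
  have hWdiff : W μ T A n - W μ T A (n - k₀) ≤ (k₀ : ℝ) * (μ (Bs T A (n - k₀))).toReal := by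
    rw [W_eq_sum μ T A S.hT S.hA S.h1 n, W_eq_sum μ T A S.hT S.hA S.h1 (n - k₀)]
    have hsplit : ∑ m ∈ Finset.range (n + 1), (μ (Bs T A m)).toReal
        = ∑ m ∈ Finset.range (n - k₀ + 1), (μ (Bs T A m)).toReal
          + ∑ m ∈ Finset.Ico (n - k₀ + 1) (n + 1), (μ (Bs T A m)).toReal := by
      rw [Finset.range_eq_Ico, Finset.range_eq_Ico]
      exact (Finset.sum_Ico_consecutive _ (by omega) (by omega)).symm
    rw [hsplit]
    have htail : ∑ m ∈ Finset.Ico (n - k₀ + 1) (n + 1), (μ (Bs T A m)).toReal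
        ≤ (k₀ : ℝ) * (μ (Bs T A (n - k₀))).toReal := by
      have hcard : (Finset.Ico (n - k₀ + 1) (n + 1)).card = k₀ := by
        rw [Nat.card_Ico]; omega
      have hb := Finset.sum_le_card_nsmul (Finset.Ico (n - k₀ + 1) (n + 1))
        (fun m => (μ (Bs T A m)).toReal) ((μ (Bs T A (n - k₀))).toReal) ?_
      · rw [hcard, nsmul_eq_mul] at hb; exact hb
      · intro m hm
        rw [Finset.mem_Ico] at hm
        exact S.c_anti (by omega)
    linarith
  have hWlow : (1 - δ) * W μ T A n ≤ W μ T A (n - k₀) := by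
    have : W μ T A 0 ≤ W μ T A n := hWmono (Nat.zero_le n)
    nlinarith
  -- combine
  rw [div_mul_eq_mul_div, div_le_one hbn] at key
  have hfinal : (1 - δ) * ((1 - δ) * W μ T A n) ≤ b n := by
    calc (1 - δ) * ((1 - δ) * W μ T A n) ≤ (1 - δ) * W μ T A (n - k₀) := by
          refine mul_le_mul_of_nonneg_left hWlow (by linarith)
      _ ≤ b n := key
  have hstep : (1 - γ) * W μ T A n ≤ (1 - δ) * ((1 - δ) * W μ T A n) := by
    rw [hδdef]
    nlinarith [hWn.le, mul_nonneg (mul_nonneg hγ0.le hγ0.le) hWn.le]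
  linarith

end Setup

end Main


section Hard

variable {μ : Measure X} {T : X → X} {A : Set X} {L : ℝ → ℝ}
  {f : X → ℝ} {hatT : (X → ℝ) → (X → ℝ)} {b : ℕ → ℝ}

namespace Setup

variable (S : Setup μ T A L f hatT b)
include S

lemma tendsto_half_nat : Tendsto (fun n : ℕ => n / 2) atTop atTop := by
  refine tendsto_atTop.2 fun m => eventually_atTop.2 ⟨2 * m, fun n hn => by omega⟩

lemma nc_zero :
    Tendsto (fun n : ℕ => (μ (Bs T A (n / 2))).toReal * ((n : ℝ) + 1) / W μ T A n)
      atTop (𝓝 0) := by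
  have hWpos := W_pos μ T A S.hT S.hA S.h0 S.h1
  have hub : Tendsto (fun n : ℕ =>
      16 * (W μ T A (n / 2) / W μ T A n - W μ T A (n / 4) / W μ T A n))
      atTop (𝓝 0) := by
    have := (S.toCtx.ratio_half.sub S.toCtx.ratio_quarter).const_mul (16:ℝ)
    simpa using this
  refine tendsto_of_tendsto_of_tendsto_of_le_of_le' tendsto_const_nhds hub ?_ ?_
  · filter_upwards with n
    have h1 := S.c_nonneg (n / 2)
    have h2 := hWpos n
    positivity
  · filter_upwards [eventually_ge_atTop 8] with n hn8
    have hWn := hWpos n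
    have hdiff : ((n : ℝ) + 1) * (μ (Bs T A (n / 2))).toReal
        ≤ 16 * (W μ T A (n / 2) - W μ T A (n / 4)) := by
      have hsplit : W μ T A (n / 2) - W μ T A (n / 4)
          = ∑ m ∈ Finset.Ico (n / 4 + 1) (n / 2 + 1), (μ (Bs T A m)).toReal := by
        rw [W_eq_sum μ T A S.hT S.hA S.h1 (n / 2), W_eq_sum μ T A S.hT S.hA S.h1 (n / 4)]
        rw [Finset.range_eq_Ico, Finset.range_eq_Ico,
          ← Finset.sum_Ico_consecutive (fun m => (μ (Bs T A m)).toReal)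
            (Nat.zero_le (n / 4 + 1)) (by omega : n / 4 + 1 ≤ n / 2 + 1)]
        ring
      have hcount : ((n / 2 - n / 4 : ℕ) : ℝ) * (μ (Bs T A (n / 2))).toReal
          ≤ ∑ m ∈ Finset.Ico (n / 4 + 1) (n / 2 + 1), (μ (Bs T A m)).toReal := by
        have hcard : (Finset.Ico (n / 4 + 1) (n / 2 + 1)).card = n / 2 - n / 4 := by
          rw [Nat.card_Ico]; omega
        have hlow := Finset.card_nsmul_le_sum (Finset.Ico (n / 4 + 1) (n / 2 + 1))
          (fun m => (μ (Bs T A m)).toReal) ((μ (Bs T A (n / 2))).toReal) ?_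
        · rw [hcard, nsmul_eq_mul] at hlow; exact hlow
        · intro m hm
          rw [Finset.mem_Ico] at hm
          exact S.c_anti (by omega)
      have hn16 : ((n : ℝ) + 1) ≤ 16 * ((n / 2 - n / 4 : ℕ) : ℝ) := by
        have : n + 1 ≤ 16 * (n / 2 - n / 4) := by omega
        exact_mod_cast this
      have hcnn := S.c_nonneg (n / 2)
      calc ((n : ℝ) + 1) * (μ (Bs T A (n / 2))).toReal
          ≤ 16 * ((n / 2 - n / 4 : ℕ) : ℝ) * (μ (Bs T A (n / 2))).toReal :=
            mul_le_mul_of_nonneg_right hn16 hcnn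
        _ ≤ 16 * (W μ T A (n / 2) - W μ T A (n / 4)) := by
            rw [hsplit]; linarith [hcount]
    rw [div_le_iff₀ hWn]
    calc (μ (Bs T A (n / 2))).toReal * ((n : ℝ) + 1)
        ≤ 16 * (W μ T A (n / 2) - W μ T A (n / 4)) := by linarith [hdiff]
      _ = 16 * (W μ T A (n / 2) / W μ T A n - W μ T A (n / 4) / W μ T A n) * W μ T A n := by
          field_simp

lemma hard_core {δ : ℝ} (hδ0 : 0 < δ) (hδ1 : δ < 1 / 4) :
    ∀ᶠ n : ℕ in atTop, (1 - 2 * δ) * b (n - n / 2) ≤ (1 + δ) * W μ T A n := by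
  obtain ⟨k₀, hk₀⟩ := eventually_atTop.1 (S.hconv δ hδ0)
  obtain ⟨k₁, hk₁⟩ := eventually_atTop.1 (S.easy_dir (γ := 1 / 2) (by norm_num) (by norm_num))
  obtain ⟨C, hCpos, hC⟩ := S.toCtx.karW
  have hWpos := W_pos μ T A S.hT S.hA S.h0 S.h1
  have hWmono := W_mono μ T A S.hT S.hA S.h1
  have hKnn : (0:ℝ) ≤ ∑ k ∈ Finset.range k₁, 1 / b k :=
    Finset.sum_nonneg fun k _ => by have := S.hb k; positivity
  have hcz : Tendsto (fun n : ℕ => (μ (Bs T A (n / 2))).toReal) atTop (𝓝 0) :=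
    S.c_to_zero.comp S.tendsto_half_nat
  have hβ : Tendsto (fun n : ℕ => (1 + δ) *
      ((μ (Bs T A (n / 2))).toReal * (∑ k ∈ Finset.range k₁, 1 / b k)
        + 2 * C * ((μ (Bs T A (n / 2))).toReal * ((n : ℝ) + 1) / W μ T A n)))
      atTop (𝓝 0) := by
    have h1 := (hcz.mul_const (∑ k ∈ Finset.range k₁, 1 / b k)).add
      (S.nc_zero.const_mul (2 * C))
    have h2 := h1.const_mul (1 + δ)
    simpa using h2
  have hE1 : Tendsto (fun n : ℕ =>
      ∑ k ∈ Finset.range k₀, ∫ x in T^[k] ⁻¹' (Bs T A (n - k)), f x ∂μ) atTop (𝓝 0) := by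
    have := tendsto_finset_sum (Finset.range k₀)
      (fun k _ => early_term_tendsto_zero μ T A f S.hT S.hc S.hA S.hfi k)
    simpa using this
  have hI := I_tendsto_one μ T A f S.hT S.hc S.he S.hA S.h0 S.hfi S.hf1
  filter_upwards [hI.eventually (eventually_ge_nhds (show 1 - δ < 1 by linarith)),
    hE1.eventually_le_const (show (0:ℝ) < δ / 2 by linarith),
    hβ.eventually_le_const (show (0:ℝ) < δ / 2 by linarith),
    eventually_ge_atTop (2 * k₀ + 2), eventually_ge_atTop k₁,
    eventually_ge_atTop (2 * k₁ + 2)] with n hIn hE1n hβn hn2k hnk₁ hnk₁'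
  set h := n - n / 2 with hhdef
  have hkh : k₀ < h := by omega
  have hhn : h ≤ n := by omega
  have hnh : n - h = n / 2 := by omega
  have hbh := S.hb h
  have hWn := hWpos n
  -- the sum over [k₀, n]
  have hw_bound : ∀ k ∈ Finset.Ico k₀ (n + 1),
      ∫ x in T^[k] ⁻¹' (Bs T A (n - k)), f x ∂μ
        ≤ (1 + δ) / b k * (μ (Bs T A (n - k))).toReal := fun k hk => by
    rw [Finset.mem_Ico] at hk
    exact (S.v_bounds hδ0 k (n - k) (hk₀ k hk.1)).2
  have hsplitAll : ∑ k ∈ Finset.range (n + 1), ∫ x in T^[k] ⁻¹' (Bs T A (n - k)), f x ∂μ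
      = ∑ k ∈ Finset.range k₀, ∫ x in T^[k] ⁻¹' (Bs T A (n - k)), f x ∂μ
        + ∑ k ∈ Finset.Ico k₀ (n + 1), ∫ x in T^[k] ⁻¹' (Bs T A (n - k)), f x ∂μ := by
    rw [Finset.range_eq_Ico, Finset.range_eq_Ico,
      ← Finset.sum_Ico_consecutive _ (Nat.zero_le k₀) (by omega : k₀ ≤ n + 1)]
  have hmid : ∑ k ∈ Finset.Ico k₀ (n + 1), ∫ x in T^[k] ⁻¹' (Bs T A (n - k)), f x ∂μ
      ≤ ∑ k ∈ Finset.Ico k₀ (n + 1), (1 + δ) / b k * (μ (Bs T A (n - k))).toReal :=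
    Finset.sum_le_sum hw_bound
  have hsplitMid : ∑ k ∈ Finset.Ico k₀ (n + 1), (1 + δ) / b k * (μ (Bs T A (n - k))).toReal
      = ∑ k ∈ Finset.Ico k₀ h, (1 + δ) / b k * (μ (Bs T A (n - k))).toReal
        + ∑ k ∈ Finset.Ico h (n + 1), (1 + δ) / b k * (μ (Bs T A (n - k))).toReal :=
    (Finset.sum_Ico_consecutive _ (by omega) (by omega)).symm
  -- Part A: k ∈ [h, n]
  have hpartA : ∑ k ∈ Finset.Ico h (n + 1), (1 + δ) / b k * (μ (Bs T A (n - k))).toReal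
      ≤ (1 + δ) * W μ T A n / b h := by
    have h1 : ∀ k ∈ Finset.Ico h (n + 1),
        (1 + δ) / b k * (μ (Bs T A (n - k))).toReal
          ≤ (1 + δ) / b h * (μ (Bs T A (n - k))).toReal := fun k hk => by
      rw [Finset.mem_Ico] at hk
      refine mul_le_mul_of_nonneg_right ?_ (S.c_nonneg _)
      exact div_le_div_of_nonneg_left (by linarith) hbh (S.hbmono hk.1)
    refine (Finset.sum_le_sum h1).trans ?_
    rw [← Finset.mul_sum]
    have h2 : ∑ k ∈ Finset.Ico h (n + 1), (μ (Bs T A (n - k))).toReal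
        = W μ T A (n - h) := by
      have hr := sum_c_reflect h n hhn (fun m => (μ (Bs T A m)).toReal)
      rw [← Finset.Ico_add_one_right_eq_Icc] at hr
      rw [hr, W_eq_sum μ T A S.hT S.hA S.h1]
    rw [h2, div_mul_eq_mul_div]
    gcongr
    exact hWmono (by omega)
  -- Part B: k ∈ [k₀, h)
  have hpartB : ∑ k ∈ Finset.Ico k₀ h, (1 + δ) / b k * (μ (Bs T A (n - k))).toReal
      ≤ (1 + δ) * ((μ (Bs T A (n / 2))).toReal * (∑ k ∈ Finset.range k₁, 1 / b k)
        + 2 * C * ((μ (Bs T A (n / 2))).toReal * ((n : ℝ) + 1) / W μ T A n)) := by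
    have hcnn := S.c_nonneg (n / 2)
    have h1 : ∀ k ∈ Finset.Ico k₀ h,
        (1 + δ) / b k * (μ (Bs T A (n - k))).toReal
          ≤ (1 + δ) * (μ (Bs T A (n / 2))).toReal * (1 / b k) := fun k hk => by
      rw [Finset.mem_Ico] at hk
      have hcle : (μ (Bs T A (n - k))).toReal ≤ (μ (Bs T A (n / 2))).toReal :=
        S.c_anti (by omega)
      have hbk := S.hb k
      calc (1 + δ) / b k * (μ (Bs T A (n - k))).toReal
          ≤ (1 + δ) / b k * (μ (Bs T A (n / 2))).toReal := by
            refine mul_le_mul_of_nonneg_left hcle ?_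
            positivity
        _ = (1 + δ) * (μ (Bs T A (n / 2))).toReal * (1 / b k) := by
            field_simp
    refine (Finset.sum_le_sum h1).trans ?_
    rw [← Finset.mul_sum]
    have hsum_b : ∑ k ∈ Finset.Ico k₀ h, 1 / b k
        ≤ (∑ k ∈ Finset.range k₁, 1 / b k) + 2 * C * (((n : ℝ) + 1) / W μ T A n) := by
      have hsub : ∑ k ∈ Finset.Ico k₀ h, 1 / b k ≤ ∑ k ∈ Finset.range (n + 1), 1 / b k := by
        refine Finset.sum_le_sum_of_subset_of_nonneg ?_
          (fun k _ _ => by have := S.hb k; positivity)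
        intro k hk
        rw [Finset.mem_Ico] at hk
        rw [Finset.mem_range]
        omega
      refine hsub.trans ?_
      have hsplit2 : ∑ k ∈ Finset.range (n + 1), 1 / b k
          = ∑ k ∈ Finset.range k₁, 1 / b k + ∑ k ∈ Finset.Ico k₁ (n + 1), 1 / b k := by
        rw [Finset.range_eq_Ico, Finset.range_eq_Ico,
          ← Finset.sum_Ico_consecutive _ (Nat.zero_le k₁) (by omega : k₁ ≤ n + 1)]
      rw [hsplit2]
      have htail : ∑ k ∈ Finset.Ico k₁ (n + 1), 1 / b k
          ≤ 2 * C * (((n : ℝ) + 1) / W μ T A n) := by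
        have hterm : ∀ k ∈ Finset.Ico k₁ (n + 1), 1 / b k ≤ 2 * (1 / W μ T A k) := by
          intro k hk
          rw [Finset.mem_Ico] at hk
          have hWk := hWpos k
          have hbk := hk₁ k hk.1
          have hbk' : W μ T A k / 2 ≤ b k := by linarith
          calc 1 / b k ≤ 1 / (W μ T A k / 2) :=
                one_div_le_one_div_of_le (by linarith) hbk'
            _ = 2 * (1 / W μ T A k) := by field_simp
        calc ∑ k ∈ Finset.Ico k₁ (n + 1), 1 / b k
            ≤ ∑ k ∈ Finset.Ico k₁ (n + 1), 2 * (1 / W μ T A k) := Finset.sum_le_sum hterm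
          _ = 2 * ∑ k ∈ Finset.Ico k₁ (n + 1), 1 / W μ T A k := by rw [Finset.mul_sum]
          _ ≤ 2 * ∑ k ∈ Finset.range (n + 1), 1 / W μ T A k := by
              refine mul_le_mul_of_nonneg_left ?_ (by norm_num)
              refine Finset.sum_le_sum_of_subset_of_nonneg ?_
                (fun k _ _ => by have := hWpos k; positivity)
              intro k hk
              rw [Finset.mem_Ico] at hk
              rw [Finset.mem_range]
              omega
          _ ≤ 2 * (C * ((n : ℝ) + 1) / W μ T A n) := by
              refine mul_le_mul_of_nonneg_left ?_ (by norm_num)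
              have := hC n
              push_cast at this ⊢
              linarith
          _ = 2 * C * (((n : ℝ) + 1) / W μ T A n) := by ring
      linarith
    calc (1 + δ) * (μ (Bs T A (n / 2))).toReal * (∑ k ∈ Finset.Ico k₀ h, 1 / b k)
        ≤ (1 + δ) * (μ (Bs T A (n / 2))).toReal
            * ((∑ k ∈ Finset.range k₁, 1 / b k) + 2 * C * (((n : ℝ) + 1) / W μ T A n)) := by
          refine mul_le_mul_of_nonneg_left hsum_b (by positivity)
      _ = (1 + δ) * ((μ (Bs T A (n / 2))).toReal * (∑ k ∈ Finset.range k₁, 1 / b k)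
            + 2 * C * ((μ (Bs T A (n / 2))).toReal * ((n : ℝ) + 1) / W μ T A n)) := by
          ring
  -- put everything together
  have hIn' : 1 - δ ≤ ∑ k ∈ Finset.range k₀, ∫ x in T^[k] ⁻¹' (Bs T A (n - k)), f x ∂μ
      + (∑ k ∈ Finset.Ico k₀ h, (1 + δ) / b k * (μ (Bs T A (n - k))).toReal
        + ∑ k ∈ Finset.Ico h (n + 1), (1 + δ) / b k * (μ (Bs T A (n - k))).toReal) := by
    have := S.renewal n
    rw [this, hsplitAll] at hIn
    rw [← hsplitMid]
    linarith [hmid]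
  have hfin : 1 - 2 * δ ≤ (1 + δ) * W μ T A n / b h := by
    linarith [hpartA, hpartB, hE1n, hβn, hIn']
  rw [le_div_iff₀ hbh] at hfin
  linarith

lemma hard_dir {γ : ℝ} (hγ0 : 0 < γ) (hγ1 : γ < 1) :
    ∀ᶠ n : ℕ in atTop, b n ≤ (1 + γ) * W μ T A n := by
  have hδ0 : 0 < γ / 8 := by positivity
  have hδ1 : γ / 8 < 1 / 4 := by linarith
  have hcore := S.hard_core hδ0 hδ1
  have hWpos := W_pos μ T A S.hT S.hA S.h0 S.h1
  have hdouble := S.toCtx.ratio_double.eventually_le_const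
    (show (1:ℝ) < 1 + γ / 8 by linarith)
  have h2m : Tendsto (fun m : ℕ => 2 * m) atTop atTop :=
    tendsto_atTop.2 fun b' => eventually_atTop.2 ⟨b', fun n hn => by omega⟩
  filter_upwards [h2m.eventually hcore, hdouble] with m hcm hdm
  have hmm : 2 * m - (2 * m) / 2 = m := by omega
  rw [hmm] at hcm
  have hWm := hWpos m
  have hW2m : W μ T A (2 * m) ≤ (1 + γ / 8) * W μ T A m := by
    rw [div_le_iff₀ hWm] at hdm
    linarith
  have hbm := S.hb m
  have h1 : (1 - 2 * (γ / 8)) * b m ≤ (1 + γ / 8) * ((1 + γ / 8) * W μ T A m) :=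
    hcm.trans (mul_le_mul_of_nonneg_left hW2m (by linarith))
  have hcoef : ((1:ℝ) + γ / 8) * (1 + γ / 8) ≤ (1 + γ) * (1 - γ / 4) := by
    nlinarith [sq_nonneg γ]
  have h2 : (1 - γ / 4) * b m ≤ (1 + γ) * (1 - γ / 4) * W μ T A m := by
    calc (1 - γ / 4) * b m = (1 - 2 * (γ / 8)) * b m := by ring
      _ ≤ (1 + γ / 8) * ((1 + γ / 8) * W μ T A m) := h1
      _ = ((1 + γ / 8) * (1 + γ / 8)) * W μ T A m := by ring
      _ ≤ (1 + γ) * (1 - γ / 4) * W μ T A m :=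
          mul_le_mul_of_nonneg_right hcoef hWm.le
  have hpos : (0:ℝ) < 1 - γ / 4 := by linarith
  nlinarith [h2, mul_pos hpos hWm]

end Setup
end Hard
end Stmt18Aux

/-- For a uniformly returning set `A` with slowly varying wandering rate `W_n ∼ L(n)`
and fixed `x ∈ (0,1)`: for all `ε ∈ (0,1)` there is `n₀` such that for `n ≥ n₀` and
integers `k ∈ [n − a_n(x), n]` one has `(1−ε)/W_n ≤ T̂^k f ≤ (1+ε)²/W_n` uniformly
(a.e.) on `A`, where `a_n(x) = L⁻¹(x·L(n))`. -/
theorem stmt18 (μ : Measure X) [SigmaFinite μ] (hinf : μ Set.univ = ⊤)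
    (T : X → X) (hT : MeasurePreserving T μ μ) (hc : Conservative T μ)
    (he : Ergodic T μ)
    (hatT : (X → ℝ) → (X → ℝ)) (hop : IsTransferOp μ T hatT)
    (A : Set X) (hA : MeasurableSet A) (h0 : 0 < μ A) (h1 : μ A < ⊤)
    (f : X → ℝ) (hf : IsDensity μ f) (hur : UniformlyReturningFor μ hatT A f)
    (L : ℝ → ℝ) (hLpos : ∀ t : ℝ, 0 < t → 0 < L t) (hLsv : RegVary L 0)
    (hLmono : StrictMonoOn L (Set.Ioi 0)) (hLcont : ContinuousOn L (Set.Ioi 0))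
    (hLtop : Tendsto L atTop atTop)
    (hW : Tendsto (fun n : ℕ => W μ T A n / L n) atTop (nhds 1))
    (x : ℝ) (hx : x ∈ Set.Ioo (0:ℝ) 1)
    (a : ℕ → ℝ) (ha : ∀ᶠ n : ℕ in atTop, 0 < a n ∧ L (a n) = x * L n) :
    ∀ ε : ℝ, ε ∈ Set.Ioo (0:ℝ) 1 → ∃ n₀ : ℕ, ∀ n ≥ n₀, ∀ k : ℕ,
      (n : ℝ) - a n ≤ k → k ≤ n →
        ∀ᵐ y ∂μ, y ∈ A →
          (1 - ε) / W μ T A n ≤ (hatT^[k] f) y ∧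
            (hatT^[k] f) y ≤ (1 + ε) ^ 2 / W μ T A n := by
  obtain ⟨hx0, hx1⟩ := hx
  obtain ⟨b, hb, hbmono, hbtop, hconv⟩ := hur
  have S : Stmt18Aux.Setup μ T A L f hatT b :=
    { hT := hT, hA := hA, h0 := h0.ne', h1 := h1.ne,
      hLpos := hLpos, hLsv := hLsv, hLmono := hLmono, hW := hW,
      hc := hc, he := he, hop := hop, hf0 := hf.1, hfi := hf.2.1, hf1 := hf.2.2,
      hb := hb, hbmono := hbmono, hconv := hconv }
  intro ε hε
  obtain ⟨hε0, hε1⟩ := hε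
  have hWpos := Stmt18Aux.W_pos μ T A hT hA h0.ne' h1.ne
  have hWmono := Stmt18Aux.W_mono μ T A hT hA h1.ne
  obtain ⟨k₀, hk₀⟩ := eventually_atTop.1 (S.hconv (ε / 2) (by positivity))
  obtain ⟨k₁, hk₁⟩ := eventually_atTop.1
    (S.easy_dir (γ := ε / 2) (by positivity) (by linarith))
  have hhard := S.hard_dir (γ := ε / 2) (by positivity) (by linarith)
  have hden : (0:ℝ) < (1 + ε) ^ 2 * (1 - ε / 2) := by
    have h' : (0:ℝ) < 1 - ε / 2 := by linarith
    positivity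
  set r : ℝ := (1 + ε / 2) / ((1 + ε) ^ 2 * (1 - ε / 2)) with hrdef
  have hr1 : r < 1 := by
    rw [hrdef, div_lt_one hden]
    nlinarith [mul_pos hε0 hε0, mul_pos (mul_pos hε0 hε0) hε0,
      mul_lt_of_lt_one_left hε0 hε1]
  have hratio := (S.toCtx.ratio_sub_half).eventually (eventually_ge_nhds hr1)
  have hL2 : Tendsto (fun n : ℕ => L ((1 / 2) * n) / L n) atTop (𝓝 1) :=
    Stmt18Aux.L_ratio L hLsv (by norm_num)
  have hxev := hL2.eventually (eventually_gt_nhds hx1)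
  have hfinal : ∀ᶠ n : ℕ in atTop, ∀ k : ℕ, (n : ℝ) - a n ≤ k → k ≤ n →
      ∀ᵐ y ∂μ, y ∈ A →
        (1 - ε) / W μ T A n ≤ (hatT^[k] f) y ∧
          (hatT^[k] f) y ≤ (1 + ε) ^ 2 / W μ T A n := by
    filter_upwards [ha, hxev, hhard, hratio, eventually_ge_atTop 1,
      eventually_ge_atTop (2 * k₀ + 2), eventually_ge_atTop (2 * k₁ + 2)]
      with n han hxn hhn hrn hn1 hnk₀ hnk₁
    have hn0 : (0:ℝ) < n := by exact_mod_cast hn1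
    have hLn : 0 < L n := hLpos _ hn0
    have hxLn : x * L n < L ((1 / 2) * n) := (lt_div_iff₀ hLn).1 hxn
    have han2 : a n ≤ (n:ℝ) / 2 := by
      by_contra hcon
      push_neg at hcon
      have hhalf : (0:ℝ) < (1 / 2) * n := by linarith
      have hlt : L ((1 / 2) * n) < L (a n) :=
        hLmono (Set.mem_Ioi.2 hhalf) (Set.mem_Ioi.2 han.1) (by linarith)
      rw [han.2] at hlt
      linarith
    intro k hk1 hk2
    have hkhalf : (n:ℝ) / 2 ≤ k := by linarith
    have h2k : n ≤ 2 * k := by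
      have h' : (n:ℝ) ≤ 2 * k := by linarith
      exact_mod_cast h'
    have hkk₀ : k₀ ≤ k := by omega
    have hkk₁ : k₁ ≤ k := by omega
    have hkh : n - n / 2 ≤ k := by omega
    have hbk := hb k
    have hWn := hWpos n
    have hbk_le : b k ≤ (1 + ε / 2) * W μ T A n := le_trans (hbmono hk2) hhn
    have hWr : r * W μ T A n ≤ W μ T A (n - n / 2) := (le_div_iff₀ hWn).1 hrn
    have hbk_ge : (1 - ε / 2) * W μ T A (n - n / 2) ≤ b k :=
      le_trans (mul_le_mul_of_nonneg_left (hWmono hkh) (by linarith)) (hk₁ k hkk₁)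
    have hlow : (1 - ε) / W μ T A n ≤ (1 - ε / 2) / b k := by
      rw [div_le_div_iff₀ hWn hbk]
      nlinarith [mul_le_mul_of_nonneg_left hbk_le (show (0:ℝ) ≤ 1 - ε by linarith),
        mul_nonneg (mul_nonneg hε0.le hε0.le) hWn.le]
    have hhigh : (1 + ε / 2) / b k ≤ (1 + ε) ^ 2 / W μ T A n := by
      rw [div_le_div_iff₀ hbk hWn]
      have hid : (1 + ε) ^ 2 * ((1 - ε / 2) * (r * W μ T A n))
          = (1 + ε / 2) * W μ T A n := by
        have hr_id : r * ((1 + ε) ^ 2 * (1 - ε / 2)) = 1 + ε / 2 :=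
          div_mul_cancel₀ _ hden.ne'
        calc (1 + ε) ^ 2 * ((1 - ε / 2) * (r * W μ T A n))
            = (r * ((1 + ε) ^ 2 * (1 - ε / 2))) * W μ T A n := by ring
          _ = (1 + ε / 2) * W μ T A n := by rw [hr_id]
      have hchain : (1 - ε / 2) * (r * W μ T A n) ≤ b k :=
        le_trans (mul_le_mul_of_nonneg_left hWr (by linarith)) hbk_ge
      calc (1 + ε / 2) * W μ T A n
          = (1 + ε) ^ 2 * ((1 - ε / 2) * (r * W μ T A n)) := hid.symm
        _ ≤ (1 + ε) ^ 2 * b k := by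
            refine mul_le_mul_of_nonneg_left hchain (by positivity)
    filter_upwards [hk₀ k hkk₀] with y hy
    intro hyA
    have habs := abs_le.1 (hy hyA)
    refine ⟨hlow.trans ?_, le_trans ?_ hhigh⟩
    · rw [div_le_iff₀ hbk, mul_comm]
      linarith [habs.1]
    · rw [le_div_iff₀ hbk, mul_comm]
      linarith [habs.2]
  obtain ⟨n₀, hn₀⟩ := eventually_atTop.1 hfinal
  exact ⟨n₀, hn₀⟩
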